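/- arXiv:2411.10904 — 2 statements merged into one kernel-verified Lean document; each statement's English description precedes it below -/
import Mathlib

section
/- The map c ↦ 𝒫_c sending a coloring vector to its tagged partition is a bijection between the set of coloring vectors in ℤⁿ and the set of tagged partitions of {1,…,n}. -/
/-- The maximum of `c₁,…,c_{i-1}` (0-indexed: `c 0, …, c (i-1)`), for `i > 0`. -/
def maxBelow {n : ℕ} (c : Fin n → ℤ) (i : Fin n) (hi : 0 < i.val) : ℤ :=
  (Finset.Iio i).sup' ⟨⟨0, lt_of_le_of_lt (Nat.zero_le _) i.isLt⟩, Finset.mem_Iio.mpr hi⟩ c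

/-- `c` is a coloring vector: the first component is 0 or 1, and each later component
satisfies `-mᵢ ≤ cᵢ ≤ 1 + mᵢ` where `mᵢ` is the max of the preceding components. -/
def IsColoringVec {n : ℕ} (c : Fin n → ℤ) : Prop :=
  (∀ h0 : 0 < n, c ⟨0, h0⟩ = 0 ∨ c ⟨0, h0⟩ = 1) ∧
  ∀ (i : Fin n) (hi : 0 < i.val), -maxBelow c i hi ≤ c i ∧ c i ≤ 1 + maxBelow c i hi

/-- A tagged partition of `{1,…,n}`: a partition into nonempty classes together with a
partial involution on the classes (encoded via `Option`) having at most one fixed point. -/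
structure TaggedPartition (n : ℕ) where
  classes : Set (Set (Fin n))
  nonempty : ∀ A ∈ classes, A.Nonempty
  cover : ∀ i : Fin n, ∃ A ∈ classes, i ∈ A
  disjoint : ∀ A ∈ classes, ∀ B ∈ classes, (A ∩ B).Nonempty → A = B
  star : Set (Fin n) → Option (Set (Fin n))
  star_dom : ∀ A, A ∉ classes → star A = none
  star_mem : ∀ A B, star A = some B → A ∈ classes ∧ B ∈ classes
  star_invol : ∀ A B, star A = some B → star B = some A
  fix_unique : ∀ A B, star A = some A → star B = some B → A = B


/-!
A coloring vector is determined by its pattern of relations `c_j = c_i` and `c_j = -c_i`.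
Indeed the positive values among `c_0, …, c_{i-1}` are exactly `1, …, m_i`, and all of them lie
in `[-m_i, m_i]`; so an entry that neither repeats nor negates an earlier one is either `0` or the
fresh value `1 + m_i`. This gives injectivity.

For surjectivity, color the orbits `{A, A*}` of the involution: the fixed class gets `0`, and the
remaining orbits, listed by their least elements, get `±1, ±2, …`, the sign `+` going to the class
that contains the least element of its orbit.
-/

open Finset

namespace TaggedPartition

variable {n : ℕ} {P Q : TaggedPartition n}

lemma ext_of_classes_star (h₁ : P.classes = Q.classes) (h₂ : P.star = Q.star) : P = Q := by
  cases P; cases Q; cases h₁; cases h₂; rfl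

noncomputable def cls (P : TaggedPartition n) (i : Fin n) : Set (Fin n) := (P.cover i).choose

lemma cls_mem (P : TaggedPartition n) (i : Fin n) : P.cls i ∈ P.classes :=
  (P.cover i).choose_spec.1

lemma mem_cls (P : TaggedPartition n) (i : Fin n) : i ∈ P.cls i :=
  (P.cover i).choose_spec.2

lemma eq_cls_of_mem {A : Set (Fin n)} (hA : A ∈ P.classes) {i : Fin n} (hi : i ∈ A) :
    A = P.cls i :=
  P.disjoint A hA _ (P.cls_mem i) ⟨i, hi, P.mem_cls i⟩

lemma cls_eq_cls_iff {i j : Fin n} : P.cls j = P.cls i ↔ j ∈ P.cls i :=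
  ⟨fun h => h ▸ P.mem_cls j, fun h => (eq_cls_of_mem (P.cls_mem i) h).symm⟩

end TaggedPartition

section maxBelow

variable {n : ℕ} {c c' : Fin n → ℤ}

lemma le_maxBelow {i j : Fin n} (hi : 0 < i.val) (hj : j < i) : c j ≤ maxBelow c i hi :=
  le_sup' c (mem_Iio.2 hj)

lemma exists_eq_maxBelow (i : Fin n) (hi : 0 < i.val) : ∃ j < i, c j = maxBelow c i hi := by
  obtain ⟨j, hj, h⟩ := exists_mem_eq_sup' (⟨⟨0, i.pos⟩, mem_Iio.2 hi⟩ : (Iio i).Nonempty) c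
  exact ⟨j, mem_Iio.1 hj, h.symm⟩

lemma maxBelow_congr {i : Fin n} (hi : 0 < i.val) (h : ∀ j < i, c j = c' j) :
    maxBelow c i hi = maxBelow c' i hi :=
  sup'_congr _ rfl fun j hj => h j (mem_Iio.1 hj)

end maxBelow

namespace IsColoringVec

variable {n : ℕ} {c c' : Fin n → ℤ}

lemma eq_zero_or_eq_one_of_val_eq_zero (hc : IsColoringVec c) {i : Fin n} (h : i.val = 0) :
    c i = 0 ∨ c i = 1 := by
  rw [show i = ⟨0, i.pos⟩ from Fin.ext h]
  exact hc.1 i.pos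

lemma exists_eq_of_pos_of_le_maxBelow (hc : IsColoringVec c) (i : Fin n) (hi : 0 < i.val)
    {t : ℤ} (ht : 0 < t) (htm : t ≤ maxBelow c i hi) : ∃ j < i, c j = t := by
  induction i using WellFoundedLT.induction generalizing t with
  | _ i ih =>
  obtain ⟨j, hji, hj⟩ := exists_eq_maxBelow (c := c) i hi
  rcases htm.eq_or_lt with rfl | hlt
  · exact ⟨j, hji, hj⟩
  rcases Nat.eq_zero_or_pos j.val with hj0 | hj0
  · rcases hc.eq_zero_or_eq_one_of_val_eq_zero hj0 with h | h <;> omega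
  · obtain ⟨k, hkj, hk⟩ := ih j hji hj0 ht (by have := (hc.2 j hj0).2; omega)
    exact ⟨k, hkj.trans hji, hk⟩

lemma eq_one_add_maxBelow (hc : IsColoringVec c) {i : Fin n} (hi : 0 < i.val) (h₀ : c i ≠ 0)
    (hnew : ∀ j < i, c j ≠ c i ∧ c j ≠ -c i) : c i = 1 + maxBelow c i hi := by
  obtain ⟨hlo, hup⟩ := hc.2 i hi
  by_contra hne
  rcases h₀.lt_or_gt with hneg | hpos
  · obtain ⟨j, hj, hcj⟩ := hc.exists_eq_of_pos_of_le_maxBelow i hi (t := -c i) (by omega) (by omega)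
    exact (hnew j hj).2 hcj
  · obtain ⟨j, hj, hcj⟩ := hc.exists_eq_of_pos_of_le_maxBelow i hi hpos (by omega)
    exact (hnew j hj).1 hcj

theorem eq_of_forall_eq_iff_of_forall_eq_neg_iff (hc : IsColoringVec c) (hc' : IsColoringVec c')
    (hE : ∀ i j, c j = c i ↔ c' j = c' i) (hN : ∀ i j, c j = -c i ↔ c' j = -c' i) :
    c = c' := by
  funext i
  induction i using WellFoundedLT.induction with
  | _ i ih =>
  by_cases hrep : ∃ j < i, c j = c i
  · obtain ⟨j, hj, h⟩ := hrep
    calc c i = c j := h.symm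
      _ = c' j := ih j hj
      _ = c' i := (hE i j).1 h
  by_cases hpart : ∃ j < i, c j = -c i
  · obtain ⟨j, hj, h⟩ := hpart
    have := (hN i j).1 h
    have := ih j hj
    omega
  have hzero : c i = 0 ↔ c' i = 0 := by
    have := hN i i
    constructor <;> intro <;> omega
  by_cases h₀ : c i = 0
  · rw [h₀, hzero.1 h₀]
  push Not at hrep hpart
  have h₀' : c' i ≠ 0 := mt hzero.2 h₀
  have hnew : ∀ j < i, c j ≠ c i ∧ c j ≠ -c i := fun j hj => ⟨hrep j hj, hpart j hj⟩
  have hnew' : ∀ j < i, c' j ≠ c' i ∧ c' j ≠ -c' i := fun j hj =>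
    ⟨mt (hE i j).2 (hrep j hj), mt (hN i j).2 (hpart j hj)⟩
  rcases Nat.eq_zero_or_pos i.val with hi | hi
  · have := hc.eq_zero_or_eq_one_of_val_eq_zero hi
    have := hc'.eq_zero_or_eq_one_of_val_eq_zero hi
    omega
  · rw [hc.eq_one_add_maxBelow hi h₀ hnew, hc'.eq_one_add_maxBelow hi h₀' hnew',
      maxBelow_congr hi ih]

end IsColoringVec

lemma Finset.eq_of_card_filter_le_eq {α : Type*} [LinearOrder α] {s : Finset α} {a b : α}
    (ha : a ∈ s) (hb : b ∈ s) (h : #(s.filter (· ≤ a)) = #(s.filter (· ≤ b))) : a = b := by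
  by_contra hne
  wlog hlt : a < b generalizing a b
  · exact this hb ha h.symm (Ne.symm hne) (lt_of_le_of_ne (not_lt.1 hlt) (Ne.symm hne))
  have hsub : s.filter (· ≤ a) ⊂ s.filter (· ≤ b) :=
    (ssubset_iff_of_subset (monotone_filter_right s fun _ _ hx => hx.trans hlt.le)).2
      ⟨b, mem_filter.2 ⟨hb, le_rfl⟩, fun hb' => not_le.2 hlt (mem_filter.1 hb').2⟩
  exact (card_lt_card hsub).ne h

namespace OrbitColoring

variable {n : ℕ} {β : Type*} (κ : Fin n → β) (σ : β → Option β)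

def SameOrbit (i j : Fin n) : Prop := κ j = κ i ∨ σ (κ i) = some (κ j)

open Classical in
noncomputable def leader (i : Fin n) : Fin n :=
  (univ.filter (SameOrbit κ σ i)).min' ⟨i, mem_filter.2 ⟨mem_univ i, Or.inl rfl⟩⟩

open Classical in
noncomputable def leaders : Finset (Fin n) :=
  univ.filter fun k => leader κ σ k = k ∧ σ (κ k) ≠ some (κ k)

noncomputable def rank (i : Fin n) : ℕ := #((leaders κ σ).filter (· ≤ leader κ σ i))

open Classical in
noncomputable def color (i : Fin n) : ℤ :=
  if σ (κ i) = some (κ i) then 0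
  else if κ i = κ (leader κ σ i) then rank κ σ i else -rank κ σ i

variable {κ σ} {i j k : Fin n}

lemma sameOrbit_leader (i : Fin n) : SameOrbit κ σ i (leader κ σ i) := by
  classical
  unfold leader
  exact (mem_filter.1 (min'_mem _ _)).2

lemma leader_le (h : SameOrbit κ σ i j) : leader κ σ i ≤ j := by
  classical
  unfold leader
  exact min'_le _ _ (mem_filter.2 ⟨mem_univ j, h⟩)

lemma leader_le_self (i : Fin n) : leader κ σ i ≤ i := leader_le (Or.inl rfl)

lemma mem_leaders : k ∈ leaders κ σ ↔ leader κ σ k = k ∧ σ (κ k) ≠ some (κ k) := by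
  classical
  simp [leaders]

lemma color_of_fixed (h : σ (κ i) = some (κ i)) : color κ σ i = 0 := if_pos h

lemma color_nonneg_of_leader_eq (h : leader κ σ i = i) : 0 ≤ color κ σ i := by
  unfold color
  rw [h, if_pos rfl]
  split_ifs <;> positivity

lemma color_of_mem_leaders (hk : k ∈ leaders κ σ) :
    color κ σ k = #((leaders κ σ).filter (· ≤ k)) := by
  obtain ⟨hlead, hfix⟩ := mem_leaders.1 hk
  unfold color rank
  rw [if_neg hfix, hlead, if_pos rfl]

lemma abs_color (hi : σ (κ i) ≠ some (κ i)) : |color κ σ i| = rank κ σ i := by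
  unfold color
  rw [if_neg hi]
  split_ifs <;> simp

section Involution

variable (hσ : ∀ a b, σ a = some b → σ b = some a)
include hσ

lemma SameOrbit.symm (h : SameOrbit κ σ i j) : SameOrbit κ σ j i :=
  h.imp Eq.symm (hσ _ _)

lemma SameOrbit.trans (h₁ : SameOrbit κ σ i j) (h₂ : SameOrbit κ σ j k) : SameOrbit κ σ i k := by
  rcases h₁ with h₁ | h₁ <;> rcases h₂ with h₂ | h₂
  · exact Or.inl (h₂.trans h₁)
  · exact Or.inr (h₁ ▸ h₂)
  · exact Or.inr (h₂ ▸ h₁)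
  · exact Or.inl (Option.some_injective _ ((hσ _ _ h₁).symm.trans h₂)).symm

lemma leader_eq_leader_iff : leader κ σ i = leader κ σ j ↔ SameOrbit κ σ i j := by
  refine ⟨fun h => ?_, fun h => ?_⟩
  · exact (sameOrbit_leader i).trans hσ (h ▸ (sameOrbit_leader j).symm hσ)
  · exact le_antisymm (leader_le (h.trans hσ (sameOrbit_leader j)))
      (leader_le ((h.symm hσ).trans hσ (sameOrbit_leader i)))

lemma fixed_iff_of_sameOrbit (h : SameOrbit κ σ i j) :
    σ (κ i) = some (κ i) ↔ σ (κ j) = some (κ j) := by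
  rcases h with h | h
  · rw [h]
  constructor
  · intro hi
    rw [Option.some_injective _ (h.symm.trans hi)]
    exact hi
  · intro hj
    rw [Option.some_injective _ ((hσ _ _ h).symm.trans hj)]
    exact hj

lemma leader_mem_leaders (hi : σ (κ i) ≠ some (κ i)) : leader κ σ i ∈ leaders κ σ :=
  mem_leaders.2 ⟨(leader_eq_leader_iff hσ).2 ((sameOrbit_leader i).symm hσ),
    mt (fixed_iff_of_sameOrbit hσ (sameOrbit_leader i)).2 hi⟩

lemma color_eq_zero_iff : color κ σ i = 0 ↔ σ (κ i) = some (κ i) := by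
  refine ⟨fun h => ?_, color_of_fixed⟩
  by_contra hi
  have hpos : 0 < rank κ σ i := card_pos.2 ⟨_, mem_filter.2 ⟨leader_mem_leaders hσ hi, le_rfl⟩⟩
  unfold color at h
  rw [if_neg hi] at h
  split_ifs at h <;> omega

lemma color_congr (h : κ i = κ j) : color κ σ i = color κ σ j := by
  have hlead : leader κ σ i = leader κ σ j := (leader_eq_leader_iff hσ).2 (Or.inl h.symm)
  unfold color rank
  rw [hlead, h]

lemma color_of_partner (h : σ (κ i) = some (κ j)) : color κ σ j = -color κ σ i := by
  by_cases hi : σ (κ i) = some (κ i)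
  · rw [color_congr hσ (Option.some_injective _ (h.symm.trans hi)), color_of_fixed hi, neg_zero]
  have hji : κ j ≠ κ i := fun e => hi (by rwa [e] at h)
  have hj : σ (κ j) ≠ some (κ j) := mt (fixed_iff_of_sameOrbit hσ (Or.inr h)).2 hi
  have hlead : leader κ σ j = leader κ σ i := ((leader_eq_leader_iff hσ).2 (Or.inr h)).symm
  unfold color rank
  rw [if_neg hi, if_neg hj, hlead]
  -- the least element of the orbit lies in exactly one of the two partner classes
  rcases sameOrbit_leader (κ := κ) (σ := σ) i with hℓ | hℓ
  · rw [if_pos hℓ.symm, if_neg (show κ j ≠ κ (leader κ σ i) by rw [hℓ]; exact hji)]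
  · have hℓj : κ (leader κ σ i) = κ j := Option.some_injective _ (hℓ.symm.trans h)
    rw [if_neg (show κ i ≠ κ (leader κ σ i) by rw [hℓj]; exact hji.symm), if_pos hℓj.symm,
      neg_neg]

lemma sameOrbit_of_abs_color_eq (hi : σ (κ i) ≠ some (κ i)) (hj : σ (κ j) ≠ some (κ j))
    (h : |color κ σ i| = |color κ σ j|) : SameOrbit κ σ i j := by
  rw [abs_color hi, abs_color hj, Nat.cast_inj] at h
  exact (leader_eq_leader_iff hσ).1
    (eq_of_card_filter_le_eq (leader_mem_leaders hσ hi) (leader_mem_leaders hσ hj) h)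

variable (hfix : ∀ a b, σ a = some a → σ b = some b → a = b)
include hfix

lemma color_eq_color_iff : color κ σ j = color κ σ i ↔ κ j = κ i := by
  refine ⟨fun h => ?_, color_congr hσ⟩
  by_cases hi : σ (κ i) = some (κ i)
  · exact hfix _ _ ((color_eq_zero_iff hσ).1 (h.trans (color_of_fixed hi))) hi
  have hj : σ (κ j) ≠ some (κ j) := fun hj =>
    hi ((color_eq_zero_iff hσ).1 (h.symm.trans (color_of_fixed hj)))
  rcases sameOrbit_of_abs_color_eq hσ hi hj (by rw [h]) with e | e
  · exact e
  · have := color_of_partner hσ e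
    exact absurd ((color_eq_zero_iff hσ).1 (by omega)) hi

lemma color_eq_neg_color_iff : color κ σ j = -color κ σ i ↔ σ (κ i) = some (κ j) := by
  refine ⟨fun h => ?_, color_of_partner hσ⟩
  by_cases hi : σ (κ i) = some (κ i)
  · have hj := (color_eq_zero_iff hσ).1 (by rw [h, color_of_fixed hi, neg_zero])
    rwa [← hfix _ _ hi hj]
  have hci : color κ σ i ≠ 0 := mt (color_eq_zero_iff hσ).1 hi
  have hj : σ (κ j) ≠ some (κ j) := fun hj => hci (by rw [color_of_fixed hj] at h; omega)
  rcases sameOrbit_of_abs_color_eq hσ hi hj (by rw [h, abs_neg]) with e | e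
  · have := color_congr hσ e
    omega
  · exact e

end Involution

lemma card_filter_lt_le_maxBelow (i : Fin n) (hi : 0 < i.val) : (#((leaders κ σ).filter (· < i)) : ℤ) ≤ maxBelow (color κ σ) i hi := by
  rcases ((leaders κ σ).filter (· < i)).eq_empty_or_nonempty with hempty | hne
  · have hlead : leader κ σ ⟨0, i.pos⟩ = ⟨0, i.pos⟩ := le_antisymm (leader_le_self _) (Nat.zero_le _)
    rw [hempty, card_empty, Nat.cast_zero]
    exact (color_nonneg_of_leader_eq hlead).trans (le_maxBelow hi hi)
  obtain ⟨hk, hki⟩ := mem_filter.1 (max'_mem _ hne)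
  have hfilter : (leaders κ σ).filter (· ≤ max' _ hne) = (leaders κ σ).filter (· < i) := by
    ext x
    simp only [mem_filter]
    exact ⟨fun ⟨hx, hxk⟩ => ⟨hx, hxk.trans_lt hki⟩, fun hx => ⟨hx.1, le_max' _ x (mem_filter.2 hx)⟩⟩
  rw [← hfilter, ← color_of_mem_leaders hk]
  exact le_maxBelow hi hki

lemma rank_le_card_filter_lt_add_one (i : Fin n) :
    rank κ σ i ≤ #((leaders κ σ).filter (· < i)) + 1 :=
  calc rank κ σ i ≤ #((leaders κ σ).filter (· ≤ i)) :=
        card_le_card (monotone_filter_right _ fun _ _ hx => hx.trans (leader_le_self i))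
    _ ≤ #(insert i ((leaders κ σ).filter (· < i))) := by
        refine card_le_card fun x hx => ?_
        obtain ⟨hx, hxi⟩ := mem_filter.1 hx
        rcases hxi.eq_or_lt with rfl | hlt
        · exact mem_insert_self x _
        · exact mem_insert_of_mem (mem_filter.2 ⟨hx, hlt⟩)
    _ ≤ _ := card_insert_le _ _

lemma rank_le_card_filter_lt_of_color_neg (h : color κ σ i < 0) :
    rank κ σ i ≤ #((leaders κ σ).filter (· < i)) := by
  have hlt : leader κ σ i < i :=
    (leader_le_self i).lt_of_ne fun he => (color_nonneg_of_leader_eq he).not_gt h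
  exact card_le_card (monotone_filter_right _ fun _ _ hx => hx.trans_lt hlt)

lemma abs_color_le_rank (i : Fin n) : |color κ σ i| ≤ rank κ σ i := by
  by_cases hi : σ (κ i) = some (κ i)
  · rw [color_of_fixed hi, abs_zero]
    exact Nat.cast_nonneg _
  · rw [abs_color hi]

theorem isColoringVec_color : IsColoringVec (color κ σ) := by
  refine ⟨fun h0 => ?_, fun i hi => ?_⟩
  · set z : Fin n := ⟨0, h0⟩
    have hlead : leader κ σ z = z := le_antisymm (leader_le_self z) (Nat.zero_le _)
    by_cases hz : σ (κ z) = some (κ z)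
    · exact Or.inl (color_of_fixed hz)
    have hmem : z ∈ leaders κ σ := mem_leaders.2 ⟨hlead, hz⟩
    refine Or.inr ?_
    rw [color_of_mem_leaders hmem, Nat.cast_eq_one, card_eq_one]
    refine ⟨z, ext fun x => ?_⟩
    simp only [mem_filter, mem_singleton]
    exact ⟨fun hx => le_antisymm hx.2 (Nat.zero_le _), fun hx => ⟨hx ▸ hmem, hx.le⟩⟩
  · have hm := card_filter_lt_le_maxBelow (κ := κ) (σ := σ) i hi
    have habs := abs_color_le_rank (κ := κ) (σ := σ) i
    have hrank : (rank κ σ i : ℤ) ≤ #((leaders κ σ).filter (· < i)) + 1 := by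
      exact_mod_cast rank_le_card_filter_lt_add_one i
    have hcard : (0 : ℤ) ≤ #((leaders κ σ).filter (· < i)) := Nat.cast_nonneg _
    refine ⟨?_, by linarith [le_abs_self (color κ σ i)]⟩
    by_cases hneg : color κ σ i < 0
    · have : (rank κ σ i : ℤ) ≤ #((leaders κ σ).filter (· < i)) := by
        exact_mod_cast rank_le_card_filter_lt_of_color_neg hneg
      linarith [neg_abs_le (color κ σ i)]
    · linarith

end OrbitColoring

theorem exists_isColoringVec_eq_iff_eq_neg_iff {n : ℕ} {β : Type*} (κ : Fin n → β)
    (σ : β → Option β) (hσ : ∀ a b, σ a = some b → σ b = some a)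
    (hfix : ∀ a b, σ a = some a → σ b = some b → a = b) :
    ∃ c : Fin n → ℤ, IsColoringVec c ∧ (∀ i j, c j = c i ↔ κ j = κ i) ∧
      ∀ i j, c j = -c i ↔ σ (κ i) = some (κ j) :=
  ⟨OrbitColoring.color κ σ, OrbitColoring.isColoringVec_color,
    fun _ _ => OrbitColoring.color_eq_color_iff hσ hfix,
    fun _ _ => OrbitColoring.color_eq_neg_color_iff hσ hfix⟩

def IsTaggedPartitionOf {n : ℕ} (c : Fin n → ℤ) (P : TaggedPartition n) : Prop :=
  P.classes = {A | ∃ i, A = {j | c j = c i}} ∧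
    ∀ A B, P.star A = some B ↔ ∃ i, A = {j | c j = c i} ∧ B = {j | c j = -c i} ∧ B.Nonempty

namespace IsTaggedPartitionOf

variable {n : ℕ} {c c' : Fin n → ℤ} {P Q : TaggedPartition n}

lemma unique (hP : IsTaggedPartitionOf c P) (hQ : IsTaggedPartitionOf c Q) : P = Q :=
  TaggedPartition.ext_of_classes_star (hP.1.trans hQ.1.symm)
    (funext fun A => Option.ext fun B => (hP.2 A B).trans (hQ.2 A B).symm)

lemma eq_of_eq (h : IsTaggedPartitionOf c P) (h' : IsTaggedPartitionOf c' P) {i j : Fin n}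
    (hij : c j = c i) : c' j = c' i := by
  have hmem : {k | c k = c i} ∈ P.classes := h.1 ▸ ⟨i, rfl⟩
  rw [h'.1] at hmem
  obtain ⟨l, hl⟩ := hmem
  have hi : c' i = c' l := (hl ▸ rfl : i ∈ {k | c' k = c' l})
  have hj : c' j = c' l := (hl ▸ hij : j ∈ {k | c' k = c' l})
  rw [hi, hj]

lemma neg_of_neg (h : IsTaggedPartitionOf c P) (h' : IsTaggedPartitionOf c' P) {i j : Fin n}
    (hij : c j = -c i) : c' j = -c' i := by
  obtain ⟨l, hA, hB, -⟩ := (h'.2 _ _).1 ((h.2 _ _).2 ⟨i, rfl, rfl, j, hij⟩)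
  have hi : c' i = c' l := (hA ▸ rfl : i ∈ {k | c' k = c' l})
  have hj : c' j = -c' l := (hB ▸ hij : j ∈ {k | c' k = -c' l})
  rw [hi, hj]

end IsTaggedPartitionOf

theorem TaggedPartition.exists_isTaggedPartitionOf {n : ℕ} (P : TaggedPartition n) :
    ∃ c, IsColoringVec c ∧ IsTaggedPartitionOf c P := by
  obtain ⟨c, hc, hE, hN⟩ :=
    exists_isColoringVec_eq_iff_eq_neg_iff P.cls P.star P.star_invol P.fix_unique
  have hlevel (i : Fin n) : {j | c j = c i} = P.cls i :=
    Set.ext fun j => (hE i j).trans P.cls_eq_cls_iff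
  have hpartner {i y : Fin n} (h : P.star (P.cls i) = some (P.cls y)) :
      {j | c j = -c i} = P.cls y := by
    ext j
    rw [Set.mem_ofPred_eq, hN, h, Option.some_inj, eq_comm, P.cls_eq_cls_iff]
  refine ⟨c, hc, ?_, fun A B => ?_⟩
  · ext A
    simp only [hlevel, Set.mem_ofPred_eq]
    refine ⟨fun hA => ?_, fun ⟨i, hA⟩ => hA ▸ P.cls_mem i⟩
    obtain ⟨x, hx⟩ := P.nonempty A hA
    exact ⟨x, P.eq_cls_of_mem hA hx⟩
  · simp only [hlevel]
    constructor
    · intro hAB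
      obtain ⟨hA, hB⟩ := P.star_mem A B hAB
      obtain ⟨x, hx⟩ := P.nonempty A hA
      obtain ⟨y, hy⟩ := P.nonempty B hB
      rw [P.eq_cls_of_mem hA hx, P.eq_cls_of_mem hB hy] at hAB
      exact ⟨x, P.eq_cls_of_mem hA hx, (P.eq_cls_of_mem hB hy).trans (hpartner hAB).symm, y, hy⟩
    · rintro ⟨i, rfl, rfl, y, hy⟩
      have h : P.star (P.cls i) = some (P.cls y) := (hN i y).1 hy
      rw [h, hpartner h]

/-- The map `c ↦ 𝒫_c` is a bijection between coloring vectors in `ℤⁿ` and tagged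
partitions of `{1,…,n}`: any map `F` sending a coloring vector `c` to the tagged
partition whose classes are `[i] = {j : c_j = cᵢ}` and whose partial involution sends
`[i]` to `[i]* = {j : c_j = -cᵢ}` (defined exactly when this set is nonempty)
is bijective. -/
theorem coloringVec_taggedPartition_bijective {n : ℕ}
    (F : {c : Fin n → ℤ // IsColoringVec c} → TaggedPartition n)
    (hclasses : ∀ c, (F c).classes = {A | ∃ i : Fin n, A = {j : Fin n | c.1 j = c.1 i}})
    (hstar : ∀ c A B, (F c).star A = some B ↔
      ∃ i : Fin n, A = {j : Fin n | c.1 j = c.1 i} ∧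
        B = {j : Fin n | c.1 j = -c.1 i} ∧ B.Nonempty) :
    Function.Bijective F := by
  have hF (c) : IsTaggedPartitionOf c.1 (F c) := ⟨hclasses c, hstar c⟩
  refine ⟨fun c c' h => Subtype.ext ?_, fun P => ?_⟩
  · have hc' : IsTaggedPartitionOf c'.1 (F c) := h ▸ hF c'
    exact c.2.eq_of_forall_eq_iff_of_forall_eq_neg_iff c'.2
      (fun _ _ => ⟨(hF c).eq_of_eq hc', hc'.eq_of_eq (hF c)⟩)
      (fun _ _ => ⟨(hF c).neg_of_neg hc', hc'.neg_of_neg (hF c)⟩)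
  · obtain ⟨c, hc, hcP⟩ := P.exists_isTaggedPartitionOf
    exact ⟨⟨c, hc⟩, (hF ⟨c, hc⟩).unique hcP⟩
end

section
/- The polydiagonal subspace Δ_c of a coloring vector c ∈ ℤⁿ is invariant under a matrix M ∈ ℝⁿˣⁿ if and only if for every k ∈ K_c, the vector w^(k) := M b^(k) satisfies: c_i = c_j implies w^(k)_i = w^(k)_j, c_i = -c_j implies w^(k)_i = -w^(k)_j, and c_i = 0 implies w^(k)_i = 0, for all distinct i, j. -/
/-- The polydiagonal subspace `Δ_c` of `ℝⁿ` associated to `c ∈ ℤⁿ`. -/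
def DeltaSub {n : ℕ} (c : Fin n → ℤ) : Submodule ℝ (Fin n → ℝ) where
  carrier := {x | ∀ i j : Fin n, (c i = c j → x i = x j) ∧ (c i = -c j → x i = -x j)}
  zero_mem' := by intro i j; simp
  add_mem' := by
    intro a b ha hb i j
    refine ⟨fun h => ?_, fun h => ?_⟩
    · simp [Pi.add_apply, (ha i j).1 h, (hb i j).1 h]
    · simp only [Pi.add_apply, (ha i j).2 h, (hb i j).2 h]; ring
  smul_mem' := by
    intro r a ha i j
    refine ⟨fun h => ?_, fun h => ?_⟩
    · simp [Pi.smul_apply, (ha i j).1 h]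
    · simp only [Pi.smul_apply, (ha i j).2 h, smul_eq_mul]; ring

/-- The set of colors of `c`: the nonzero absolute values of its components. -/
def Kc {n : ℕ} (c : Fin n → ℤ) : Finset ℤ := (Finset.univ.image fun i => |c i|).erase 0

/-- The basis vector `b⁽ᵏ⁾` with `b⁽ᵏ⁾ᵢ = δ_k(cᵢ)`. -/
def bvec {n : ℕ} (c : Fin n → ℤ) (k : ℤ) : Fin n → ℝ :=
  fun i => if c i = k then 1 else if c i = -k then -1 else 0

/-!
A vector of `Δ_c` vanishes where `cᵢ = 0` and, on each class `{i : |cᵢ| = k}`, is one of its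
coordinates times the sign pattern of `b⁽ᵏ⁾`; hence the `b⁽ᵏ⁾`, `k ∈ K_c`, span `Δ_c`, and invariance
need only be checked on them. For `i ≠ j` the pairwise conditions are those defining `Δ_c`; the
diagonal anti-synchrony `cᵢ = -cᵢ` is the condition `cᵢ = 0 → wᵢ = 0`, since `K_c ≠ ∅` provides
some `j ≠ i` with `c_j ≠ 0`.
-/

theorem Submodule.forall_apply_mem_iff_of_eq_span {R V : Type*} [Semiring R] [AddCommMonoid V]
    [Module R V] {S : Submodule R V} {s : Set V} (hS : S = Submodule.span R s) (f : V →ₗ[R] V) :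
    (∀ x ∈ S, f x ∈ S) ↔ ∀ x ∈ s, f x ∈ S := by
  subst hS
  exact ⟨fun h x hx => h x (Submodule.subset_span hx),
    fun h _ hx => (Submodule.span_le (p := (Submodule.span R s).comap f)).2 h hx⟩

section

variable {n : ℕ} {c : Fin n → ℤ}

theorem mem_Kc_iff {k : ℤ} : k ∈ Kc c ↔ k ≠ 0 ∧ ∃ i, |c i| = k := by
  simp [Kc]

theorem pos_of_mem_Kc {k : ℤ} (hk : k ∈ Kc c) : 0 < k := by
  obtain ⟨hk0, i, rfl⟩ := mem_Kc_iff.1 hk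
  exact lt_of_le_of_ne (abs_nonneg _) (Ne.symm hk0)

theorem abs_mem_Kc {i : Fin n} (hi : c i ≠ 0) : |c i| ∈ Kc c :=
  mem_Kc_iff.2 ⟨abs_ne_zero.2 hi, i, rfl⟩

theorem apply_eq_zero_of_mem_deltaSub {x : Fin n → ℝ} (hx : x ∈ DeltaSub c) {i : Fin n}
    (hi : c i = 0) : x i = 0 := by
  have := (hx i i).2 (by omega)
  linarith

theorem bvec_apply_of_abs_ne {k : ℤ} {i : Fin n} (h : |c i| ≠ |k|) : bvec c k i = 0 := by
  unfold bvec
  rw [if_neg, if_neg] <;> rintro hi <;> simp [hi] at h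

theorem bvec_apply_mul_self {k : ℤ} {i : Fin n} (h : |c i| = |k|) :
    bvec c k i * bvec c k i = 1 := by
  unfold bvec
  rcases abs_eq_abs.1 h with hi | hi <;> split_ifs <;> norm_num

theorem bvec_mem_deltaSub {k : ℤ} (hk : k ≠ 0) : bvec c k ∈ DeltaSub c := by
  intro i j
  unfold bvec
  constructor <;> intro h <;> split_ifs <;> norm_num <;> omega

theorem mul_bvec_eq_of_mem_deltaSub {x : Fin n → ℝ} (hx : x ∈ DeltaSub c) (k : ℤ) {i j : Fin n}
    (h : |c i| = |c j|) : x i * bvec c k i = x j * bvec c k j := by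
  rcases abs_eq_abs.1 h with h | h
  · simp only [bvec, (hx i j).1 h, h]
  · have hxj0 : c j = 0 → x j = 0 := apply_eq_zero_of_mem_deltaSub hx
    rw [(hx i j).2 h]
    unfold bvec
    split_ifs <;> first | omega | ring1 | simp [hxj0 (by omega)]

theorem sum_smul_bvec_eq_of_mem_deltaSub {x : Fin n → ℝ} (hx : x ∈ DeltaSub c) {a : ℤ → ℝ}
    (ha : ∀ i, a |c i| = x i * bvec c |c i| i) : ∑ k ∈ Kc c, a k • bvec c k = x := by
  funext j
  simp only [Finset.sum_apply, Pi.smul_apply, smul_eq_mul]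
  have hvanish : ∀ k ∈ Kc c, k ≠ |c j| → a k * bvec c k j = 0 := fun k hk hkj => by
    rw [bvec_apply_of_abs_ne (by rwa [abs_of_pos (pos_of_mem_Kc hk), ne_comm]), mul_zero]
  by_cases hj : c j = 0
  · rw [apply_eq_zero_of_mem_deltaSub hx hj]
    refine Finset.sum_eq_zero fun k hk => hvanish k hk ?_
    rw [hj, abs_zero]
    exact (pos_of_mem_Kc hk).ne'
  · rw [Finset.sum_eq_single_of_mem _ (abs_mem_Kc hj) hvanish, ha, mul_assoc,
      bvec_apply_mul_self (abs_abs _).symm, mul_one]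

theorem deltaSub_eq_span : DeltaSub c = Submodule.span ℝ (bvec c '' Kc c) := by
  classical
  refine le_antisymm (fun x hx => ?_) (Submodule.span_le.2 ?_)
  · set a : ℤ → ℝ := fun k =>
      if h : ∃ i, |c i| = k then x h.choose * bvec c k h.choose else 0
    have ha : ∀ i, a |c i| = x i * bvec c |c i| i := fun i => by
      have h : ∃ r, |c r| = |c i| := ⟨i, rfl⟩
      simp only [a, dif_pos h]
      exact mul_bvec_eq_of_mem_deltaSub hx _ h.choose_spec
    rw [← sum_smul_bvec_eq_of_mem_deltaSub hx ha]
    exact Submodule.sum_mem _ fun k hk =>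
      Submodule.smul_mem _ _ (Submodule.subset_span (Set.mem_image_of_mem _ hk))
  · rintro _ ⟨k, hk, rfl⟩
    exact bvec_mem_deltaSub (mem_Kc_iff.1 hk).1

theorem mem_deltaSub_iff_pairwise (hc : ∃ l, c l ≠ 0) {x : Fin n → ℝ} :
    x ∈ DeltaSub c ↔ ∀ i j : Fin n, i ≠ j →
      (c i = c j → x i = x j) ∧ (c i = -c j → x i = -x j) ∧ (c i = 0 → x i = 0) := by
  refine ⟨fun hx i j _ => ⟨(hx i j).1, (hx i j).2, apply_eq_zero_of_mem_deltaSub hx⟩,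
    fun h i j => ?_⟩
  by_cases hij : i = j
  · subst hij
    refine ⟨fun _ => rfl, fun hi => ?_⟩
    have hi0 : c i = 0 := by omega
    obtain ⟨l, hl⟩ := hc
    have hil : i ≠ l := by
      rintro rfl
      exact hl hi0
    rw [(h i l hil).2.2 hi0, neg_zero]
  · exact ⟨(h i j hij).1, (h i j hij).2.1⟩

end

theorem deltaSub_invariant_iff_general {n : ℕ} (c : Fin n → ℤ)
    (M : Matrix (Fin n) (Fin n) ℝ) :
    (∀ x ∈ DeltaSub c, M.mulVec x ∈ DeltaSub c) ↔
      ∀ k ∈ Kc c, ∀ i j : Fin n, i ≠ j →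
        (c i = c j → M.mulVec (bvec c k) i = M.mulVec (bvec c k) j) ∧
        (c i = -c j → M.mulVec (bvec c k) i = -M.mulVec (bvec c k) j) ∧
        (c i = 0 → M.mulVec (bvec c k) i = 0) := by
  refine (Submodule.forall_apply_mem_iff_of_eq_span deltaSub_eq_span M.mulVecLin).trans ?_
  simp only [Set.forall_mem_image, Matrix.mulVecLin_apply, Finset.mem_coe]
  refine forall₂_congr fun k hk => mem_deltaSub_iff_pairwise ?_
  obtain ⟨hk0, l, rfl⟩ := mem_Kc_iff.1 hk
  exact ⟨l, abs_ne_zero.1 hk0⟩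

/-- `Δ_c` is invariant under `M` iff for every color `k ∈ K_c`, the vector
`w⁽ᵏ⁾ = M b⁽ᵏ⁾` satisfies the synchrony/anti-synchrony conditions of `c`. -/
theorem deltaSub_invariant_iff {n : ℕ} (c : Fin n → ℤ) (hc : IsColoringVec c)
    (M : Matrix (Fin n) (Fin n) ℝ) :
    (∀ x ∈ DeltaSub c, M.mulVec x ∈ DeltaSub c) ↔
      ∀ k ∈ Kc c, ∀ i j : Fin n, i ≠ j →
        (c i = c j → M.mulVec (bvec c k) i = M.mulVec (bvec c k) j) ∧
        (c i = -c j → M.mulVec (bvec c k) i = -M.mulVec (bvec c k) j) ∧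
        (c i = 0 → M.mulVec (bvec c k) i = 0) :=
  deltaSub_invariant_iff_general c M
end
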